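/- With β^k defined as the (k+1)-fold self-convolution of the centered unit rectangle β⁰, one has the closed-form representation β^k(t) = (1/k!) Σ_{j=0}^{k+1} C(k+1, j) (-1)^j (t + (k+1)/2 - j)₊^k for every k ≥ 1 and t ∈ ℝ, where x₊ = max(x, 0) and C(k+1,j) is a binomial coefficient. -/

import Mathlib

/-!
`β^k` is `β^{k-1}` averaged over a window of width one, i.e. integrated over `[t - 1/2, t + 1/2]`.
Integrating the truncated power `(x)₊^k` raises it to `(x)₊^{k+1}/(k+1)`, and the window turns the
sum over `j` into a first difference, which Pascal's rule absorbs into the binomial coefficients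
`C(k+2, j)`. Starting from `β⁰ = (t + 1/2)₊^0 - (t - 1/2)₊^0` (almost everywhere, with `0₊^0 = 0`),
induction gives the formula for every `k`, pointwise once `k ≥ 1`.
-/

open MeasureTheory Real

/-- The centered unit rectangle `β⁰`. -/
noncomputable def beta0 : ℝ → ℝ := fun t =>
  if |t| < 1 / 2 then 1 else if |t| = 1 / 2 then 1 / 2 else 0

/-- `β^k`, the `(k+1)`-fold self-convolution of `β⁰`: `β^k = β^{k-1} ⋆ β⁰`. -/
noncomputable def betaB : ℕ → ℝ → ℝ
  | 0 => beta0
  | (k + 1) => fun t => ∫ s, betaB k s * beta0 (t - s)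

open Set Filter Finset Nat

/-- The truncated power `x₊^k`, with the convention `0₊^0 = 0`: so `truncPow 0` is the Heaviside
step and the closed form below also holds for `k = 0`, almost everywhere. -/
noncomputable def truncPow (k : ℕ) (x : ℝ) : ℝ := if 0 < x then x ^ k else 0

lemma truncPow_eq_max_pow {k : ℕ} (hk : k ≠ 0) (x : ℝ) : truncPow k x = max x 0 ^ k := by
  rcases lt_or_ge 0 x with hx | hx
  · simp [truncPow, hx, hx.le]
  · simp [truncPow, hx.not_gt, hx, hk]

lemma truncPow_monotone (k : ℕ) : Monotone (truncPow k) := by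
  intro x y hxy
  unfold truncPow
  split_ifs with hx hy hy
  · exact pow_le_pow_left₀ hx.le hxy k
  · exact absurd (hx.trans_le hxy) hy
  · positivity
  · rfl

lemma continuous_truncPow_succ (k : ℕ) : Continuous (truncPow (k + 1)) := by
  simp only [funext (truncPow_eq_max_pow k.succ_ne_zero)]
  fun_prop

lemma hasDerivAt_truncPow_succ (k : ℕ) {x : ℝ} (hx : x ≠ 0) :
    HasDerivAt (truncPow (k + 1)) ((k + 1) * truncPow k x) x := by
  rcases hx.lt_or_gt with hx | hx
  · have hzero : truncPow (k + 1) =ᶠ[nhds x] fun _ => 0 := by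
      filter_upwards [eventually_lt_nhds hx] with y hy
      simp [truncPow, hy.not_gt]
    simpa [truncPow, hx.not_gt] using (hasDerivAt_const x (0 : ℝ)).congr_of_eventuallyEq hzero
  · have hpow : truncPow (k + 1) =ᶠ[nhds x] fun y => y ^ (k + 1) := by
      filter_upwards [eventually_gt_nhds hx] with y hy
      simp [truncPow, hy]
    simpa [truncPow, hx] using (hasDerivAt_pow (k + 1) x).congr_of_eventuallyEq hpow

lemma integral_truncPow (k : ℕ) (a b : ℝ) :
    ∫ x in a..b, truncPow k x = (truncPow (k + 1) b - truncPow (k + 1) a) / (k + 1) := by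
  rw [sub_div]
  refine integral_eq_of_hasDerivAt_off_countable (fun x => truncPow (k + 1) x / (k + 1)) _
    (countable_singleton 0) ((continuous_truncPow_succ k).div_const _).continuousOn
    (fun x hx => ?_) (truncPow_monotone k).intervalIntegrable
  have hk : (k : ℝ) + 1 ≠ 0 := by positivity
  simpa [hk] using (hasDerivAt_truncPow_succ k hx.2).div_const ((k : ℝ) + 1)

lemma sum_choose_neg_one_pow_mul_sub (n : ℕ) (P : ℕ → ℝ) :
    ∑ j ∈ range (n + 1), (n.choose j : ℝ) * (-1) ^ j * (P j - P (j + 1)) =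
      ∑ j ∈ range (n + 2), ((n + 1).choose j : ℝ) * (-1) ^ j * P j := by
  have hshift : ∑ j ∈ range (n + 1), (n.choose (j + 1) : ℝ) * (-1) ^ (j + 1) * P (j + 1) =
      ∑ j ∈ range (n + 1), (n.choose j : ℝ) * (-1) ^ j * P j - P 0 := by
    have h := sum_range_succ' (fun j => (n.choose j : ℝ) * (-1) ^ j * P j) (n + 1)
    simp only [sum_range_succ _ (n + 1), choose_succ_self, choose_zero_right, Nat.cast_zero,
      zero_mul, add_zero, Nat.cast_one, pow_zero, one_mul] at h
    linarith
  rw [sum_range_succ' _ (n + 1)]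
  simp only [Nat.choose_succ_succ', Nat.cast_add, add_mul, sum_add_distrib, hshift]
  simp [mul_sub, sum_sub_distrib, pow_succ]
  ring

noncomputable def schoenbergSum (k : ℕ) (t : ℝ) : ℝ :=
  (1 / (Nat.factorial k : ℝ)) * ∑ j ∈ range (k + 2),
    ((k + 1).choose j : ℝ) * (-1) ^ j * truncPow k (t + (k + 1) / 2 - j)

lemma integral_schoenbergSum (k : ℕ) (t : ℝ) :
    ∫ s in t - 1 / 2..t + 1 / 2, schoenbergSum k s = schoenbergSum (k + 1) t := by
  set P : ℕ → ℝ := fun j => truncPow (k + 1) (t + ((k + 1 : ℕ) + 1) / 2 - j)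
  have hterm : ∀ j : ℕ, ∫ s in t - 1 / 2..t + 1 / 2, truncPow k (s + (k + 1) / 2 - j) =
      (P j - P (j + 1)) / (k + 1) := by
    intro j
    simp_rw [add_sub_assoc]
    rw [intervalIntegral.integral_comp_add_right, integral_truncPow]
    simp only [P]
    push_cast
    ring_nf
  have hint : ∀ j ∈ range (k + 2), IntervalIntegrable
      (fun s => ((k + 1).choose j : ℝ) * (-1) ^ j * truncPow k (s + (k + 1) / 2 - j))
      volume (t - 1 / 2) (t + 1 / 2) := fun j _ =>
    ((truncPow_monotone k).comp fun _ _ h => by simpa using h).intervalIntegrable.const_mul _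
  simp only [schoenbergSum]
  rw [intervalIntegral.integral_const_mul, intervalIntegral.integral_finsetSum hint]
  have hfactorial (S : ℝ) : 1 / (k ! : ℝ) * S / (k + 1) = 1 / ((k + 1)! : ℕ) * S := by
    push_cast [Nat.factorial_succ]
    field_simp
  simp only [intervalIntegral.integral_const_mul, hterm, ← mul_div_assoc, ← sum_div,
    sum_choose_neg_one_pow_mul_sub (k + 1) P]
  exact hfactorial _

lemma integral_mul_beta0_sub (f : ℝ → ℝ) (t : ℝ) :
    ∫ s, f s * beta0 (t - s) = ∫ s in t - 1 / 2..t + 1 / 2, f s := by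
  have hindicator :
      (fun s => f s * beta0 (t - s)) =ᵐ[volume] (Ioo (t - 1 / 2) (t + 1 / 2)).indicator f := by
    filter_upwards [Measure.ae_ne volume (t - 1 / 2), Measure.ae_ne volume (t + 1 / 2)] with s h₁ h₂
    have hedge : |t - s| ≠ 1 / 2 := by
      rw [Ne, abs_eq (by norm_num)]
      rintro (h | h)
      exacts [h₁ (by linarith), h₂ (by linarith)]
    by_cases hs : |t - s| < 1 / 2
    · have hmem : s ∈ Ioo (t - 1 / 2) (t + 1 / 2) := by
        constructor <;> linarith [abs_lt.mp hs]
      simp only [beta0, if_pos hs, indicator_of_mem hmem, mul_one]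
    · have hmem : s ∉ Ioo (t - 1 / 2) (t + 1 / 2) := fun ⟨ha, hb⟩ =>
        hs (abs_lt.mpr ⟨by linarith, by linarith⟩)
      simp only [beta0, if_neg hs, if_neg hedge, indicator_of_notMem hmem, mul_zero]
  rw [integral_congr_ae hindicator, integral_indicator measurableSet_Ioo,
    intervalIntegral.integral_of_le (by linarith), integral_Ioc_eq_integral_Ioo]

lemma beta0_ae_eq_schoenbergSum_zero : beta0 =ᵐ[volume] schoenbergSum 0 := by
  filter_upwards [Measure.ae_ne volume (1 / 2), Measure.ae_ne volume (-(1 / 2))] with t h₁ h₂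
  have hedge : |t| ≠ 1 / 2 := by
    rw [Ne, abs_eq (by norm_num)]
    tauto
  simp only [beta0, if_neg hedge, schoenbergSum, truncPow]
  norm_num [sum_range_succ]
  split_ifs <;> cases abs_cases t <;> first | linarith | exact absurd (by linarith) hedge

lemma betaB_succ_apply (k : ℕ) (t : ℝ) :
    betaB (k + 1) t = ∫ s in t - 1 / 2..t + 1 / 2, betaB k s :=
  integral_mul_beta0_sub (betaB k) t

lemma betaB_succ_apply_of_ae_eq {k : ℕ} (hk : betaB k =ᵐ[volume] schoenbergSum k) (t : ℝ) :
    betaB (k + 1) t = schoenbergSum (k + 1) t := by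
  rw [betaB_succ_apply, ← integral_schoenbergSum]
  exact intervalIntegral.integral_congr_ae (hk.mono fun _ hs _ => hs)

lemma betaB_ae_eq_schoenbergSum (k : ℕ) : betaB k =ᵐ[volume] schoenbergSum k := by
  induction k with
  | zero => exact beta0_ae_eq_schoenbergSum_zero
  | succ k ih => exact .of_forall (betaB_succ_apply_of_ae_eq ih)

/-- the Schoenberg closed-form representation
`β^k(t) = (1/k!) Σ_{j=0}^{k+1} C(k+1,j)(-1)^j (t+(k+1)/2-j)₊^k` for `k ≥ 1`. -/
theorem bspline_schoenberg_formula (k : ℕ) (hk : 1 ≤ k) (t : ℝ) :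
    betaB k t = (1 / (Nat.factorial k : ℝ)) *
      ∑ j ∈ Finset.range (k + 2),
        ((k + 1).choose j : ℝ) * (-1) ^ j * (max (t + (k + 1) / 2 - j) 0) ^ k := by
  obtain ⟨n, rfl⟩ := Nat.exists_eq_add_of_le' hk
  rw [betaB_succ_apply_of_ae_eq (betaB_ae_eq_schoenbergSum n), schoenbergSum]
  simp only [truncPow_eq_max_pow n.succ_ne_zero]
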